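/- Let q = p^r with p prime and r ≥ 1, and let k > 2 be an integer with gcd(k, r) = 1. Then the polynomial Q_{T,k,F_q}(X) = X^k − q·Σ_{l=0}^{k−2} (q−1)^l X^{k−2−l} ∈ ℤ[X] is irreducible over ℚ. -/

import Mathlib

open Polynomial

/-- Existence of the least index among indices of nonzero coefficients minimizing a
weight function. -/
lemma QT_exists_min_index (g : ℤ[X]) (hg : g ≠ 0) (val : ℕ → ℕ) :
    ∃ a, g.coeff a ≠ 0 ∧ (∀ j, g.coeff j ≠ 0 → val a ≤ val j) ∧
      ∀ i, i < a → g.coeff i ≠ 0 → val a < val i := by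
  classical
  have hsupp : g.support.Nonempty := Polynomial.nonempty_support_iff.mpr hg
  have himg : (g.support.image val).Nonempty := hsupp.image val
  obtain ⟨i0, hi0mem, hi0⟩ := Finset.mem_image.mp (Finset.min'_mem _ himg)
  have hQ : ∃ i, g.coeff i ≠ 0 ∧ ∀ j, g.coeff j ≠ 0 → val i ≤ val j := by
    refine ⟨i0, Polynomial.mem_support_iff.mp hi0mem, fun j hj => ?_⟩
    rw [hi0]
    exact Finset.min'_le _ _ (Finset.mem_image_of_mem val (Polynomial.mem_support_iff.mpr hj))
  refine ⟨Nat.find hQ, (Nat.find_spec hQ).1, (Nat.find_spec hQ).2, fun i hi hci => ?_⟩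
  have hnot := Nat.find_min hQ hi
  push_neg at hnot
  obtain ⟨j, hj, hji⟩ := hnot hci
  exact lt_of_le_of_lt ((Nat.find_spec hQ).2 j hj) hji

/-- Dumas-style Newton polygon argument: if `f` is monic of degree `k`, all lower
coefficients are divisible by `p^r`, the constant coefficient is not divisible by
`p^(r+1)`, and `gcd(k,r) = 1`, then any factorization of `f` over `ℤ` has a constant
factor. -/
lemma QT_dumas {p k r : ℕ} (hp : p.Prime) (hk : 0 < k) (hkr : Nat.Coprime k r)
    (f g h : ℤ[X]) (hmonic : f.Monic) (hdeg : f.natDegree = k)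
    (hmid : ∀ i, i < k → (p : ℤ) ^ r ∣ f.coeff i)
    (h0 : ¬ (p : ℤ) ^ (r + 1) ∣ f.coeff 0)
    (hf : f = g * h) :
    g.natDegree = 0 ∨ h.natDegree = 0 := by
  haveI := Fact.mk hp
  have hf0 : f ≠ 0 := hmonic.ne_zero
  have hg0 : g ≠ 0 := fun hgz => hf0 (by rw [hf, hgz, zero_mul])
  have hh0 : h ≠ 0 := fun hhz => hf0 (by rw [hf, hhz, mul_zero])
  set d := g.natDegree with hd
  set e := h.natDegree with he
  have hde : d + e = k := by
    rw [hf, Polynomial.natDegree_mul hg0 hh0] at hdeg; exact hdeg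
  have hlead : g.leadingCoeff * h.leadingCoeff = 1 := by
    have := hmonic
    rw [Polynomial.Monic, hf, Polynomial.leadingCoeff_mul] at this
    exact this
  -- valuation of the leading coefficients is 0
  have hvlead_g : padicValInt p g.leadingCoeff = 0 := by
    have hu : g.leadingCoeff = 1 ∨ g.leadingCoeff = -1 :=
      Int.isUnit_iff.mp (IsUnit.of_mul_eq_one _ hlead)
    rcases hu with hu | hu <;> simp [hu, padicValInt]
  have hvlead_h : padicValInt p h.leadingCoeff = 0 := by
    have hu : h.leadingCoeff = 1 ∨ h.leadingCoeff = -1 :=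
      Int.isUnit_iff.mp (IsUnit.of_mul_eq_one _ (by rw [mul_comm] at hlead; exact hlead))
    rcases hu with hu | hu <;> simp [hu, padicValInt]
  -- weight functions
  set valg : ℕ → ℕ := fun i => k * padicValInt p (g.coeff i) + r * i with hvalg
  set valh : ℕ → ℕ := fun i => k * padicValInt p (h.coeff i) + r * i with hvalh
  obtain ⟨a, hane, hamin, hastrict⟩ := QT_exists_min_index g hg0 valg
  obtain ⟨b, hbne, hbmin, hbstrict⟩ := QT_exists_min_index h hh0 valh
  set m := padicValInt p (g.coeff a) + padicValInt p (h.coeff b) with hm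
  -- the key non-divisibility
  have hnd : ¬ (p : ℤ) ^ (m + 1) ∣ f.coeff (a + b) := by
    rw [hf, Polynomial.coeff_mul]
    have hmem : (a, b) ∈ Finset.HasAntidiagonal.antidiagonal (a + b) := by
      simp [Finset.HasAntidiagonal.mem_antidiagonal]
    rw [← Finset.add_sum_erase _ _ hmem]
    intro hdvd
    have hrest : (p : ℤ) ^ (m + 1) ∣
        ∑ x ∈ (Finset.HasAntidiagonal.antidiagonal (a + b)).erase (a, b), g.coeff x.1 * h.coeff x.2 := by
      refine Finset.dvd_sum fun x hx => ?_
      have hxab : x.1 + x.2 = a + b :=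
        Finset.HasAntidiagonal.mem_antidiagonal.mp (Finset.mem_of_mem_erase hx)
      have hxne : x ≠ (a, b) := Finset.ne_of_mem_erase hx
      by_cases hg1 : g.coeff x.1 = 0
      · simp [hg1]
      by_cases hh1 : h.coeff x.2 = 0
      · simp [hh1]
      have hx1ne : x.1 ≠ a := by
        intro hxa
        apply hxne
        have : x.2 = b := by omega
        exact Prod.ext hxa this
      have e1 : k * m = k * padicValInt p (g.coeff a) + k * padicValInt p (h.coeff b) := by
        rw [hm, Nat.mul_add]
      have e2 : k * (padicValInt p (g.coeff x.1) + padicValInt p (h.coeff x.2)) =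
          k * padicValInt p (g.coeff x.1) + k * padicValInt p (h.coeff x.2) := Nat.mul_add _ _ _
      have e3 : r * x.1 + r * x.2 = r * a + r * b := by
        rw [← Nat.mul_add, ← Nat.mul_add, hxab]
      have hkey : k * m + 1 ≤ k * (padicValInt p (g.coeff x.1) + padicValInt p (h.coeff x.2)) := by
        rcases lt_or_gt_of_ne hx1ne with hlt | hgt
        · have h1 : valg a < valg x.1 := hastrict _ hlt hg1
          have h2 : valh b ≤ valh x.2 := hbmin _ hh1
          simp only [hvalg, hvalh] at h1 h2
          omega
        · have hx2lt : x.2 < b := by omega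
          have h1 : valh b < valh x.2 := hbstrict _ hx2lt hh1
          have h2 : valg a ≤ valg x.1 := hamin _ hg1
          simp only [hvalg, hvalh] at h1 h2
          omega
      have hvge : m + 1 ≤ padicValInt p (g.coeff x.1) + padicValInt p (h.coeff x.2) := by
        by_contra hcon
        push_neg at hcon
        have : k * (padicValInt p (g.coeff x.1) + padicValInt p (h.coeff x.2)) ≤ k * m :=
          Nat.mul_le_mul_left _ (by omega)
        omega
      rw [padicValInt_dvd_iff]
      refine Or.inr ?_
      rw [padicValInt.mul hg1 hh1]
      exact hvge
    have hterm : (p : ℤ) ^ (m + 1) ∣ g.coeff a * h.coeff b := by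
      have := dvd_sub hdvd hrest
      simpa using this
    rw [padicValInt_dvd_iff] at hterm
    rcases hterm with hz | hle
    · exact (mul_ne_zero hane hbne) hz
    · rw [padicValInt.mul hane hbne] at hle
      omega
  -- consequences
  have hfabne : f.coeff (a + b) ≠ 0 := fun hz => hnd (by rw [hz]; exact dvd_zero _)
  have hvfab : padicValInt p (f.coeff (a + b)) ≤ m := by
    by_contra hcon
    push_neg at hcon
    exact hnd ((padicValInt_dvd_iff _ _).mpr (Or.inr (by omega)))
  have hale : a ≤ d := Polynomial.le_natDegree_of_ne_zero hane
  have hble : b ≤ e := Polynomial.le_natDegree_of_ne_zero hbne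
  have habk : a + b ≤ k := by omega
  -- shape of f gives lower bound
  have hshape : k * r ≤ k * padicValInt p (f.coeff (a + b)) + r * (a + b) := by
    rcases eq_or_lt_of_le habk with heq | hlt
    · rw [heq]
      have : k * r = r * k := Nat.mul_comm _ _
      omega
    · have hdvd : (p : ℤ) ^ r ∣ f.coeff (a + b) := hmid _ hlt
      rw [padicValInt_dvd_iff] at hdvd
      rcases hdvd with hz | hle
      · exact absurd hz hfabne
      · have : k * r ≤ k * padicValInt p (f.coeff (a + b)) := Nat.mul_le_mul_left _ hle
        omega
  have hWsum : k * r ≤ (k * padicValInt p (g.coeff a) + r * a) +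
      (k * padicValInt p (h.coeff b) + r * b) := by
    have h1 : k * padicValInt p (f.coeff (a + b)) ≤ k * m := Nat.mul_le_mul_left _ hvfab
    have e1 : k * m = k * padicValInt p (g.coeff a) + k * padicValInt p (h.coeff b) := by
      rw [hm, Nat.mul_add]
    have e3 : r * (a + b) = r * a + r * b := Nat.mul_add _ _ _
    omega
  -- upper bounds from leading coefficients
  have hWg_le : k * padicValInt p (g.coeff a) + r * a ≤ r * d := by
    have hlg : g.coeff d ≠ 0 := by
      rw [hd, ← Polynomial.leadingCoeff]
      exact fun hz => hg0 (Polynomial.leadingCoeff_eq_zero.mp hz)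
    have h1 := hamin d hlg
    simp only [hvalg] at h1 ⊢
    have h2 : g.coeff d = g.leadingCoeff := by rw [Polynomial.leadingCoeff, ← hd]
    rw [h2, hvlead_g, mul_zero, zero_add] at h1
    exact h1
  have hWh_le : k * padicValInt p (h.coeff b) + r * b ≤ r * e := by
    have hlh : h.coeff e ≠ 0 := by
      rw [he, ← Polynomial.leadingCoeff]
      exact fun hz => hh0 (Polynomial.leadingCoeff_eq_zero.mp hz)
    have h1 := hbmin e hlh
    simp only [hvalh] at h1 ⊢
    have h2 : h.coeff e = h.leadingCoeff := by rw [Polynomial.leadingCoeff, ← he]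
    rw [h2, hvlead_h, mul_zero, zero_add] at h1
    exact h1
  have hkr' : k * r = r * d + r * e := by rw [← Nat.mul_add, hde, Nat.mul_comm]
  -- now look at the constant coefficient
  have hf00 : f.coeff 0 = g.coeff 0 * h.coeff 0 := by
    rw [hf, Polynomial.mul_coeff_zero]
  have hf0ne : f.coeff 0 ≠ 0 := fun hz => h0 (by rw [hz]; exact dvd_zero _)
  have hg00 : g.coeff 0 ≠ 0 := fun hz => hf0ne (by rw [hf00, hz, zero_mul])
  have hh00 : h.coeff 0 ≠ 0 := fun hz => hf0ne (by rw [hf00, hz, mul_zero])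
  have hvf0 : padicValInt p (f.coeff 0) ≤ r := by
    by_contra hcon
    push_neg at hcon
    exact h0 ((padicValInt_dvd_iff _ _).mpr (Or.inr (by omega)))
  have hvf0eq : padicValInt p (f.coeff 0) =
      padicValInt p (g.coeff 0) + padicValInt p (h.coeff 0) := by
    rw [hf00]
    exact padicValInt.mul hg00 hh00
  have hg0ge : r * d ≤ k * padicValInt p (g.coeff 0) := by
    have h1 := hamin 0 hg00
    simp only [hvalg] at h1
    omega
  have hh0ge : r * e ≤ k * padicValInt p (h.coeff 0) := by
    have h1 := hbmin 0 hh00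
    simp only [hvalh] at h1
    omega
  have hsum0 : k * padicValInt p (g.coeff 0) + k * padicValInt p (h.coeff 0) ≤ k * r := by
    rw [← Nat.mul_add, ← hvf0eq]
    exact Nat.mul_le_mul_left _ hvf0
  have hexact : k * padicValInt p (g.coeff 0) = r * d := by omega
  have hkdvd : k ∣ d := by
    have hdr : k ∣ d * r := ⟨padicValInt p (g.coeff 0), by rw [hexact, Nat.mul_comm]⟩
    exact hkr.dvd_of_dvd_mul_right hdr
  rcases Nat.eq_zero_or_pos d with hd0 | hdpos
  · exact Or.inl hd0
  · right
    have : k ≤ d := Nat.le_of_dvd hdpos hkdvd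
    omega

/-- Let `q = p^r` with `p` prime, `r ≥ 1`, and let `k > 2` with `gcd(k, r) = 1`.
Then `Q_{T,k,F_q}(X) = X^k − q·∑_{l=0}^{k−2} (q−1)^l X^{k−2−l}` is irreducible over `ℚ`. -/
theorem Q_trapezoid_irreducible (p r k : ℕ) (hp : p.Prime) (hr : 1 ≤ r) (hk : 2 < k)
    (hkr : Nat.gcd k r = 1) :
    Irreducible ((X ^ k - C ((p : ℚ) ^ r) *
      ∑ l ∈ Finset.range (k - 1), C (((p : ℚ) ^ r - 1) ^ l) * X ^ (k - 2 - l)) : ℚ[X]) := by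
  set q : ℤ := (p : ℤ) ^ r with hq
  set F : ℤ[X] := X ^ k - C q *
      ∑ l ∈ Finset.range (k - 1), C ((q - 1) ^ l) * X ^ (k - 2 - l) with hF
  -- the target polynomial is the image of F under the cast
  have hmap : F.map (Int.castRingHom ℚ) = X ^ k - C ((p : ℚ) ^ r) *
      ∑ l ∈ Finset.range (k - 1), C (((p : ℚ) ^ r - 1) ^ l) * X ^ (k - 2 - l) := by
    simp only [hF, Polynomial.map_sub, Polynomial.map_pow, Polynomial.map_mul,
      Polynomial.map_sum, Polynomial.map_X, Polynomial.map_C, Int.coe_castRingHom]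
    simp only [hq]
    push_cast
    rfl
  -- degree bookkeeping
  have hSdeg : (C q * ∑ l ∈ Finset.range (k - 1),
      C ((q - 1) ^ l) * X ^ (k - 2 - l)).natDegree ≤ k - 2 := by
    refine le_trans (Polynomial.natDegree_C_mul_le _ _) ?_
    refine Polynomial.natDegree_sum_le_of_forall_le _ _ fun l hl => ?_
    refine le_trans (Polynomial.natDegree_C_mul_le _ _) ?_
    rw [Polynomial.natDegree_X_pow]
    omega
  have hSdeg' : (C q * ∑ l ∈ Finset.range (k - 1),
      C ((q - 1) ^ l) * X ^ (k - 2 - l)).degree < (k : WithBot ℕ) := by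
    refine lt_of_le_of_lt (Polynomial.degree_le_natDegree) ?_
    exact_mod_cast lt_of_le_of_lt hSdeg (by omega)
  have hmonic : F.Monic := Polynomial.monic_X_pow_sub (by exact_mod_cast hSdeg')
  have hdeg : F.natDegree = k := by
    rw [hF, Polynomial.natDegree_sub_eq_left_of_natDegree_lt, Polynomial.natDegree_X_pow]
    rw [Polynomial.natDegree_X_pow]
    omega
  -- coefficients
  have hcoeff_lt : ∀ i, i < k → F.coeff i =
      -(q * (∑ l ∈ Finset.range (k - 1), C ((q - 1) ^ l) * X ^ (k - 2 - l)).coeff i) := by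
    intro i hi
    rw [hF, Polynomial.coeff_sub, Polynomial.coeff_X_pow, if_neg (by omega),
      Polynomial.coeff_C_mul]
    ring
  have hmid : ∀ i, i < k → (p : ℤ) ^ r ∣ F.coeff i := by
    intro i hi
    rw [hcoeff_lt i hi, hq]
    exact dvd_neg.mpr (Dvd.intro _ rfl)
  have hc0 : F.coeff 0 = -(q * (q - 1) ^ (k - 2)) := by
    rw [hcoeff_lt 0 (by omega)]
    congr 1
    congr 1
    rw [Polynomial.finset_sum_coeff]
    rw [Finset.sum_eq_single (k - 2)]
    · rw [Polynomial.coeff_C_mul, Polynomial.coeff_X_pow, if_pos (by omega)]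
      ring
    · intro l hl hlne
      rw [Polynomial.coeff_C_mul, Polynomial.coeff_X_pow, if_neg]
      · ring
      · simp only [Finset.mem_range] at hl
        omega
    · intro hmem
      exact absurd (Finset.mem_range.mpr (by omega)) hmem
  have h0 : ¬ (p : ℤ) ^ (r + 1) ∣ F.coeff 0 := by
    rw [hc0, hq, dvd_neg]
    intro hdvd
    have hprime : Prime (p : ℤ) := Nat.prime_iff_prime_int.mp hp
    have hpne : ((p : ℤ) ^ r) ≠ 0 := pow_ne_zero _ (by exact_mod_cast hp.ne_zero)
    have hdvd' : (p : ℤ) ∣ ((p : ℤ) ^ r - 1) ^ (k - 2) := by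
      have : ((p : ℤ) ^ r) * (p : ℤ) ∣ ((p : ℤ) ^ r) * ((p : ℤ) ^ r - 1) ^ (k - 2) := by
        rw [← pow_succ]
        exact hdvd
      exact (mul_dvd_mul_iff_left hpne).mp this
    have hdvd2 : (p : ℤ) ∣ ((p : ℤ) ^ r - 1) := hprime.dvd_of_dvd_pow hdvd'
    have hdvd3 : (p : ℤ) ∣ (p : ℤ) ^ r := dvd_pow_self _ (by omega)
    have hdvd4 : (p : ℤ) ∣ 1 := by
      have := dvd_sub hdvd3 hdvd2
      simpa using this
    exact hprime.not_unit (isUnit_of_dvd_one hdvd4)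
  -- reduce to irreducibility over ℤ
  have hiff := hmonic.irreducible_iff_irreducible_map_fraction_map (K := ℚ)
  rw [algebraMap_int_eq, hmap] at hiff
  refine hiff.mp ?_
  constructor
  · intro hu
    have := Polynomial.natDegree_eq_zero_of_isUnit hu
    omega
  · intro g h hgh
    have hlead : g.leadingCoeff * h.leadingCoeff = 1 := by
      have hm := hmonic
      rw [Polynomial.Monic, hgh, Polynomial.leadingCoeff_mul] at hm
      exact hm
    rcases QT_dumas hp (by omega : 0 < k) hkr F g h hmonic hdeg hmid h0 hgh with hd0 | he0
    · left
      rw [Polynomial.eq_C_of_natDegree_eq_zero hd0]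
      refine Polynomial.isUnit_C.mpr ?_
      have : g.leadingCoeff = g.coeff 0 := by
        rw [Polynomial.leadingCoeff, hd0]
      exact this ▸ IsUnit.of_mul_eq_one _ hlead
    · right
      rw [Polynomial.eq_C_of_natDegree_eq_zero he0]
      refine Polynomial.isUnit_C.mpr ?_
      have : h.leadingCoeff = h.coeff 0 := by
        rw [Polynomial.leadingCoeff, he0]
      exact this ▸ IsUnit.of_mul_eq_one _ (by rw [mul_comm] at hlead; exact hlead)
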